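/- arXiv:chao-dyn/9305008 — 4 statements merged into one kernel-verified Lean document; each statement's English description precedes it below -/
import Mathlib

section
/- Every continuous map τ : A^ℤ → A^ℤ commuting with the shift σ (a cellular automaton) admits a local rule: there exist R ∈ ℕ and f : A^{2R+1} → A such that (τ(s))_i = f(s_{i−R},…,s_{i+R}) for all s ∈ A^ℤ and i ∈ ℤ. Conversely, every map defined by such a local rule is continuous and commutes with σ. -/
/-!
Shift-equivariance makes `τ` determined by the map `s ↦ (τ s)_0`, as `(τ s)_i = (τ (σ^i s))_0`.
That map is continuous from the compact space `A^ℤ` to a discrete space, so it is locally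
constant on cylinders and, by compactness, depends only on coordinates in a finite set,
hence on a window `[-R, R]`: this yields the local rule. Conversely, a sliding block code is
continuous coordinatewise and visibly commutes with `σ`.
-/

/-- The (right) shift map on bi-infinite sequences: `(σ s)_i = s_{i+1}`. -/
def shft {α : Type} : (ℤ → α) → (ℤ → α) := fun s i => s (i + 1)

open Set Topology

theorem Continuous.exists_finset_dependsOn {ι B : Type*} {A : ι → Type*}
    [∀ i, TopologicalSpace (A i)] [∀ i, DiscreteTopology (A i)] [∀ i, CompactSpace (A i)]
    [TopologicalSpace B] [DiscreteTopology B] {g : (∀ i, A i) → B} (hg : Continuous g) :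
    ∃ I : Finset ι, DependsOn g I := by
  classical
  have hcyl : ∀ s, ∃ I : Finset ι, (I : Set ι).pi (fun i => {s i}) ⊆ g ⁻¹' {g s} := by
    intro s
    obtain ⟨I, u, hu, hsub⟩ :=
      isOpen_pi_iff.1 ((isOpen_discrete {g s}).preimage hg) s rfl
    exact ⟨I, (Set.pi_mono fun i hi => singleton_subset_iff.2 (hu i hi).2).trans hsub⟩
  choose I hI using hcyl
  have hnhds : ∀ s, (I s : Set ι).pi (fun i => {s i}) ∈ 𝓝 s := fun s =>
    (isOpen_set_pi (I s).finite_toSet fun i _ => isOpen_discrete _).mem_nhds (by simp)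
  obtain ⟨T, -, hT⟩ := isCompact_univ.elim_nhds_subcover _ fun s _ => hnhds s
  refine ⟨T.biUnion I, fun s t hst => ?_⟩
  obtain ⟨s₀, hs₀T, hs₀⟩ := mem_iUnion₂.1 (hT (mem_univ s))
  have ht₀ : t ∈ (I s₀ : Set ι).pi (fun i => {s₀ i}) := fun i hi =>
    (hst i (Finset.mem_biUnion.2 ⟨s₀, hs₀T, hi⟩)).symm.trans (hs₀ i hi)
  exact (hI s₀ hs₀).trans (hI s₀ ht₀).symm

theorem DependsOn.exists_comp_of_injective {ι κ A B : Type*} [Nonempty κ]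
    {g : (ι → A) → B} {e : κ → ι} (he : Function.Injective e) (hg : DependsOn g (range e)) :
    ∃ f : (κ → A) → B, ∀ s, g s = f (s ∘ e) := by
  obtain ⟨k₀⟩ := ‹Nonempty κ›
  refine ⟨fun w => g (Function.extend e w fun _ => w k₀), fun s => hg ?_⟩
  rintro _ ⟨k, rfl⟩
  exact (he.extend_apply (s ∘ e) _ k).symm

theorem Finset.exists_subset_range_sub_natCast (I : Finset ℤ) :
    ∃ R : ℕ, (I : Set ℤ) ⊆ Set.range fun j : Fin (2 * R + 1) => (j : ℤ) - R := by
  refine ⟨I.sup Int.natAbs, fun a ha => ?_⟩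
  have haR : a.natAbs ≤ I.sup Int.natAbs := Finset.le_sup ha
  exact ⟨⟨(a + I.sup Int.natAbs).toNat, by omega⟩, by simp only; omega⟩

theorem Fin.sub_natCast_injective (R : ℕ) :
    Function.Injective fun j : Fin (2 * R + 1) => (j : ℤ) - R := by
  intro a b h
  simpa [Fin.ext_iff] using h

section

variable {A B : Type}

theorem apply_add_of_comp_shft_eq {τ : (ℤ → A) → (ℤ → B)}
    (hτ : τ ∘ shft = shft ∘ τ) (i : ℤ) (s : ℤ → A) (j : ℤ) :
    τ (fun k => s (k + i)) j = τ s (j + i) := by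
  have hstep : ∀ u j, τ (shft u) j = τ u (j + 1) := fun u j => congrFun (congrFun hτ u) j
  induction i using Int.induction_on generalizing j with
  | zero => simp
  | succ n ih =>
    calc τ (fun k => s (k + (n + 1))) j = τ (shft fun k => s (k + n)) j := by
          congr 1; funext k; exact congrArg s (by ring)
      _ = τ s (j + (n + 1)) := by rw [hstep, ih, add_right_comm, add_assoc]
  | pred n ih =>
    calc τ (fun k => s (k + (-n - 1))) j = τ (shft fun k => s (k + (-n - 1))) (j - 1) := by
          rw [hstep, sub_add_cancel]
      _ = τ (fun k => s (k + -n)) (j - 1) := by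
          congr 1; funext k; exact congrArg s (by ring)
      _ = τ s (j + (-n - 1)) := by rw [ih]; ring_nf

def slidingBlockCode (R : ℕ) (f : (Fin (2 * R + 1) → A) → B) :
    (ℤ → A) → (ℤ → B) :=
  fun s i => f fun j => s (i - R + j)

theorem continuous_slidingBlockCode [TopologicalSpace A] [DiscreteTopology A]
    [TopologicalSpace B] (R : ℕ) (f : (Fin (2 * R + 1) → A) → B) :
    Continuous (slidingBlockCode R f) :=
  continuous_pi fun _ => continuous_of_discreteTopology.comp
    (continuous_pi fun _ => continuous_apply _)

theorem slidingBlockCode_comp_shft (R : ℕ) (f : (Fin (2 * R + 1) → A) → B) :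
    slidingBlockCode R f ∘ shft = shft ∘ slidingBlockCode R f := by
  funext s i
  simp only [Function.comp, slidingBlockCode, shft]
  congr 1; funext j; congr 1; ring

theorem exists_slidingBlockCode_eq [TopologicalSpace A] [DiscreteTopology A]
    [CompactSpace A] [TopologicalSpace B] [DiscreteTopology B] {τ : (ℤ → A) → (ℤ → B)}
    (hc : Continuous τ) (hτ : τ ∘ shft = shft ∘ τ) :
    ∃ (R : ℕ) (f : (Fin (2 * R + 1) → A) → B), τ = slidingBlockCode R f := by
  obtain ⟨I, hI⟩ := ((continuous_apply 0).comp hc).exists_finset_dependsOn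
  obtain ⟨R, hIR⟩ := I.exists_subset_range_sub_natCast
  obtain ⟨f, hf⟩ := (hI.mono hIR).exists_comp_of_injective (Fin.sub_natCast_injective R)
  refine ⟨R, f, funext₂ fun s i => ?_⟩
  calc τ s i = τ (fun k => s (k + i)) 0 := by rw [apply_add_of_comp_shft_eq hτ, zero_add]
    _ = f fun j => s (i - R + j) :=
      (hf _).trans (congrArg f (funext fun j => congrArg s (by ring)))

theorem curtis_hedlund_lyndon [TopologicalSpace A] [DiscreteTopology A]
    [CompactSpace A] [TopologicalSpace B] [DiscreteTopology B] (τ : (ℤ → A) → (ℤ → B)) :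
    (Continuous τ ∧ τ ∘ shft = shft ∘ τ) ↔
      ∃ (R : ℕ) (f : (Fin (2 * R + 1) → A) → B), τ = slidingBlockCode R f := by
  refine ⟨fun ⟨hc, hτ⟩ => exists_slidingBlockCode_eq hc hτ, ?_⟩
  rintro ⟨R, f, rfl⟩
  exact ⟨continuous_slidingBlockCode R f, slidingBlockCode_comp_shft R f⟩

end

/-- Curtis–Hedlund–Lyndon: a map `τ : A^ℤ → A^ℤ` is continuous and
commutes with the shift iff it admits a local rule `f : A^{2R+1} → A` with
`(τ s)_i = f(s_{i−R},…,s_{i+R})`. -/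
theorem stmt_2 (A : Type) [Fintype A] [TopologicalSpace A] [DiscreteTopology A]
    (τ : (ℤ → A) → (ℤ → A)) :
    (Continuous τ ∧ τ ∘ shft = shft ∘ τ) ↔
    ∃ (R : ℕ) (f : (Fin (2 * R + 1) → A) → A),
      ∀ (s : ℤ → A) (i : ℤ),
        τ s i = f (fun j => s (i - (R : ℤ) + ((j : ℕ) : ℤ))) := by
  rw [curtis_hedlund_lyndon]
  simp only [funext_iff, slidingBlockCode]
end

section
/- If (T,Q) is an expansive formal multiscattering system, then there exist a finite alphabet A, a subshift Σ ⊆ A^ℤ, and a continuous surjection Φ : Σ → Λ(T,Q) with Φ ∘ σ = T ∘ Φ (i.e., a surjective semi-conjugacy from a symbolic dynamics onto the trapped set). If moreover (T,Q) has a generator consisting of pairwise disjoint sets, Φ can be chosen to be a homeomorphism, and then Λ(T,Q) is totally disconnected. -/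
/-- A formal multiscattering system (FMS), with `I^i = T^i(Q) ∩ Q`. -/
def IsFMS {M : Type} [MetricSpace M] (T : Equiv.Perm M) (Q : Set M) : Prop :=
  IsCompact Q ∧
  ContinuousOn T Q ∧ ContinuousOn T.symm (⇑T '' Q) ∧
  (∀ n : ℕ, (⇑(T ^ ((n : ℤ) + 1)) '' (⇑(T ^ (-(n : ℤ))) '' Q ∩ Q) \ Q).Nonempty) ∧
  (∀ n : ℕ, (⇑(T ^ ((n : ℤ) + 1)) '' (⇑(T ^ (-(n : ℤ))) '' Q ∩ Q) ∩ Q).Nonempty) ∧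
  (∀ x ∈ Q, T x ∉ Q → ∀ n : ℕ, 1 ≤ n → ⇑(T ^ (n : ℤ)) x ∉ Q)

/-- The trapped set `Λ(T,Q) = ⋂_{i∈ℤ} T^i(Q)`. -/
def trapped {M : Type} (T : Equiv.Perm M) (Q : Set M) : Set M :=
  ⋂ i : ℤ, ⇑(T ^ i) '' Q

/-- `T` restricted to the trapped set is expansive. -/
def FMSExpansive {M : Type} [MetricSpace M] (T : Equiv.Perm M) (Q : Set M) : Prop :=
  ∃ δ > (0 : ℝ), ∀ x ∈ trapped T Q, ∀ y ∈ trapped T Q, x ≠ y →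
    ∃ n : ℤ, δ < dist (⇑(T ^ n) x) (⇑(T ^ n) y)

/-- A generator for the FMS. -/
def IsGenerator {M : Type} [MetricSpace M] (T : Equiv.Perm M) (Q : Set M)
    (α : Finset (Set M)) : Prop :=
  (∀ U ∈ α, IsOpen U) ∧ trapped T Q ⊆ ⋃₀ (α : Set (Set M)) ∧
  ∀ f : ℤ → Set M, (∀ i, f i ∈ α) →
    Set.Subsingleton (Q ∩ ⋂ i : ℤ, ⇑(T ^ i) '' closure (f i))

/-!
Code a point `x` of the trapped set `Λ` by its itineraries `s`, i.e. `Tⁱ x ∈ K (s i)` for all `i`,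
through a finite closed cover `K` of `Λ`. If an itinerary determines its point, sending it to that
point is a semi-conjugacy from the shift on the set of itineraries onto `T` on `Λ`; both the
closedness of that set and the continuity of the map come from compactness of `Λ`. For an
expansive system, closed balls of half an expansivity constant form such a cover. For a generator
of pairwise disjoint open sets the closures of its members do, and since the members themselves
cover `Λ` disjointly, the itinerary of a point of `Λ` is unique and locally constant: it inverts
the coding continuously and embeds `Λ` into the totally disconnected space `ℤ → Fin n`.
-/
open Set Filter Topology Function

namespace Equiv.Perm

variable {M : Type*} {T : Equiv.Perm M} {s : Set M}

theorem mem_zpow_image_iff {i : ℤ} {x : M} : x ∈ ⇑(T ^ i) '' s ↔ (T ^ (-i)) x ∈ s := by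
  rw [Equiv.image_eq_preimage_symm, mem_preimage, zpow_neg, inv_def]

theorem mapsTo_zpow (h : MapsTo T s s) (h' : MapsTo T.symm s s) (i : ℤ) :
    MapsTo ⇑(T ^ i) s s := by
  induction i using Int.induction_on with
  | zero => exact mapsTo_id s
  | succ k ih => rw [zpow_add_one, coe_mul]; exact ih.comp h
  | pred k ih => rw [zpow_sub_one, coe_mul, inv_def]; exact ih.comp h'

theorem continuousOn_zpow [TopologicalSpace M] (hc : ContinuousOn T s)
    (hc' : ContinuousOn T.symm s) (h : MapsTo T s s) (h' : MapsTo T.symm s s) (i : ℤ) :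
    ContinuousOn ⇑(T ^ i) s := by
  induction i using Int.induction_on with
  | zero => exact continuousOn_id
  | succ k ih => rw [zpow_add_one, coe_mul]; exact ih.comp hc h
  | pred k ih => rw [zpow_sub_one, coe_mul, inv_def]; exact ih.comp hc' h'

end Equiv.Perm

structure IsCompactInvariant {M : Type*} [TopologicalSpace M] (T : Equiv.Perm M) (Λ : Set M) :
    Prop where
  isCompact : IsCompact Λ
  mapsTo : MapsTo T Λ Λ
  mapsTo_symm : MapsTo T.symm Λ Λ
  continuousOn : ContinuousOn T Λ
  continuousOn_symm : ContinuousOn T.symm Λ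

namespace IsCompactInvariant

variable {M : Type*} [TopologicalSpace M] {T : Equiv.Perm M} {Λ : Set M}

theorem mapsTo_zpow (hΛ : IsCompactInvariant T Λ) (i : ℤ) : MapsTo ⇑(T ^ i) Λ Λ :=
  Equiv.Perm.mapsTo_zpow hΛ.mapsTo hΛ.mapsTo_symm i

theorem continuousOn_zpow (hΛ : IsCompactInvariant T Λ) (i : ℤ) : ContinuousOn ⇑(T ^ i) Λ :=
  Equiv.Perm.continuousOn_zpow hΛ.continuousOn hΛ.continuousOn_symm hΛ.mapsTo hΛ.mapsTo_symm i

end IsCompactInvariant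

section Trapped

variable {M : Type} {T : Equiv.Perm M} {Q s : Set M} {x : M}

theorem mem_trapped_iff : x ∈ trapped T Q ↔ ∀ i : ℤ, (T ^ i) x ∈ Q := by
  simp only [trapped, mem_iInter, Equiv.Perm.mem_zpow_image_iff]
  exact ⟨fun h i => by simpa using h (-i), fun h i => h (-i)⟩

theorem trapped_subset : trapped T Q ⊆ Q := fun x hx => by
  simpa using mem_trapped_iff.1 hx 0

theorem trapped_subset_image : trapped T Q ⊆ T '' Q := fun x hx => by
  simpa using mem_iInter.1 hx 1

theorem subset_trapped (hsQ : s ⊆ Q) (hs : ∀ i : ℤ, MapsTo ⇑(T ^ i) s s) : s ⊆ trapped T Q :=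
  fun _ hx => mem_trapped_iff.2 fun i => hsQ (hs i hx)

theorem mapsTo_zpow_trapped (i : ℤ) : MapsTo ⇑(T ^ i) (trapped T Q) (trapped T Q) :=
  fun x hx => mem_trapped_iff.2 fun j => by
    rw [← Equiv.Perm.mul_apply, ← zpow_add]
    exact mem_trapped_iff.1 hx _

theorem mapsTo_trapped : MapsTo T (trapped T Q) (trapped T Q) := by
  simpa only [zpow_one] using mapsTo_zpow_trapped (T := T) (Q := Q) 1

theorem mapsTo_symm_trapped : MapsTo T.symm (trapped T Q) (trapped T Q) := by
  simpa [Equiv.Perm.inv_def] using mapsTo_zpow_trapped (T := T) (Q := Q) (-1)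

variable [TopologicalSpace M] [T2Space M]

/-- The closure of `Λ` lies in `Q` and in `T(Q)`, on which `T` resp. `T⁻¹` are continuous, so it
is again invariant, hence contained in `Λ`. -/
theorem isClosed_trapped (hQ : IsCompact Q) (hT : ContinuousOn T Q)
    (hT' : ContinuousOn T.symm (T '' Q)) : IsClosed (trapped T Q) := by
  have hQ' : closure (trapped T Q) ⊆ Q := hQ.isClosed.closure_subset_iff.2 trapped_subset
  have hTQ' : closure (trapped T Q) ⊆ T '' Q :=
    (hQ.image_of_continuousOn hT).isClosed.closure_subset_iff.2 trapped_subset_image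
  have hmaps := mapsTo_trapped.closure_of_continuousOn (hT.mono hQ')
  have hmaps' := mapsTo_symm_trapped.closure_of_continuousOn (hT'.mono hTQ')
  exact closure_subset_iff_isClosed.1 (subset_trapped hQ' (Equiv.Perm.mapsTo_zpow hmaps hmaps'))

theorem isCompactInvariant_trapped (hQ : IsCompact Q) (hT : ContinuousOn T Q)
    (hT' : ContinuousOn T.symm (T '' Q)) : IsCompactInvariant T (trapped T Q) where
  isCompact := hQ.of_isClosed_subset (isClosed_trapped hQ hT hT') trapped_subset
  mapsTo := mapsTo_trapped
  mapsTo_symm := mapsTo_symm_trapped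
  continuousOn := hT.mono trapped_subset
  continuousOn_symm := hT'.mono trapped_subset_image

end Trapped

section Coding

variable {M ι : Type} {T : Equiv.Perm M} {Λ C : Set M} {K : ι → Set M} {s : ℤ → ι} {x : M}

def IsItinerary (T : Equiv.Perm M) (K : ι → Set M) (x : M) (s : ℤ → ι) : Prop :=
  ∀ i, (T ^ i) x ∈ K (s i)

def itineraries (T : Equiv.Perm M) (Λ : Set M) (K : ι → Set M) : Set (ℤ → ι) :=
  {s | ∃ x ∈ Λ, IsItinerary T K x s}

noncomputable def decode [Nonempty M] (T : Equiv.Perm M) (Λ : Set M) (K : ι → Set M)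
    (s : ℤ → ι) : M :=
  Classical.epsilon fun x => x ∈ Λ ∧ IsItinerary T K x s

theorem decode_spec [Nonempty M] (hs : s ∈ itineraries T Λ K) :
    decode T Λ K s ∈ Λ ∧ IsItinerary T K (decode T Λ K s) s :=
  Classical.epsilon_spec hs

theorem IsItinerary.apply (h : IsItinerary T K x s) : IsItinerary T K (T x) (shft s) :=
  fun i => by rw [← Equiv.Perm.mul_apply, ← zpow_add_one]; exact h (i + 1)

theorem IsItinerary.symm_apply (h : IsItinerary T K x s) :
    IsItinerary T K (T.symm x) fun i => s (i - 1) :=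
  fun i => by rw [← Equiv.Perm.inv_def, ← Equiv.Perm.mul_apply, ← zpow_sub_one]; exact h (i - 1)

noncomputable def itinerary [Nonempty ι] (T : Equiv.Perm M) (U : ι → Set M) (x : M) : ℤ → ι :=
  fun i => Classical.epsilon fun j => (T ^ i) x ∈ U j

theorem itinerary_apply_eq [Nonempty ι] {U : ι → Set M} (hdisj : Pairwise (Disjoint on U))
    {i : ℤ} {j : ι} (h : (T ^ i) x ∈ U j) : itinerary T U x i = j := by
  by_contra hne
  have hspec : (T ^ i) x ∈ U (itinerary T U x i) :=
    Classical.epsilon_spec (p := fun j => (T ^ i) x ∈ U j) ⟨j, h⟩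
  exact disjoint_left.1 (hdisj hne) hspec h

variable [TopologicalSpace M]

structure IsSeparatingCover (T : Equiv.Perm M) (Λ : Set M) (K : ι → Set M) : Prop where
  isClosed : ∀ j, IsClosed (K j)
  subset_iUnion : Λ ⊆ ⋃ j, K j
  subsingleton : ∀ s, {x ∈ Λ | IsItinerary T K x s}.Subsingleton

theorem shft_image_itineraries (hΛ : IsCompactInvariant T Λ) :
    shft '' itineraries T Λ K = itineraries T Λ K := by
  refine Subset.antisymm ?_ fun s ⟨x, hx, hxs⟩ =>
    ⟨fun i => s (i - 1), ⟨T.symm x, hΛ.mapsTo_symm hx, hxs.symm_apply⟩,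
      funext fun i => congrArg s (add_sub_cancel_right i 1)⟩
  rintro _ ⟨s, ⟨x, hx, hxs⟩, rfl⟩
  exact ⟨T x, hΛ.mapsTo hx, hxs.apply⟩

/-- The heart of the coding: by compactness, a point-free itinerary is already point-free on
finitely many coordinates, and fixing finitely many coordinates is an open condition. -/
theorem eventually_forall_not_isItinerary [T2Space M] [TopologicalSpace ι] [DiscreteTopology ι]
    (hC : IsCompact C) (hT : ∀ i : ℤ, ContinuousOn ⇑(T ^ i) C) (hK : ∀ j, IsClosed (K j))
    (h : ∀ x ∈ C, ¬IsItinerary T K x s) : ∀ᶠ t in 𝓝 s, ∀ x ∈ C, ¬IsItinerary T K x t := by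
  obtain ⟨I, hI⟩ := hC.elim_finite_subfamily_closed (fun i => C ∩ ⇑(T ^ i) ⁻¹' K (s i))
    (fun i => (hT i).preimage_isClosed_of_isClosed hC.isClosed (hK _))
    (eq_empty_iff_forall_notMem.2 fun x ⟨hxC, hx⟩ => h x hxC fun i => (mem_iInter.1 hx i).2)
  have hcyl : ∀ᶠ t in 𝓝 s, ∀ i ∈ I, t i = s i := I.eventually_all.2 fun i _ =>
    (continuous_apply i).continuousAt ((isOpen_discrete {s i}).mem_nhds rfl)
  filter_upwards [hcyl] with t ht x hxC hxt
  exact eq_empty_iff_forall_notMem.1 hI x ⟨hxC, mem_iInter₂.2 fun i hi => ⟨hxC, ht i hi ▸ hxt i⟩⟩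

theorem isClosed_itineraries [T2Space M] [TopologicalSpace ι] [DiscreteTopology ι]
    (hΛ : IsCompactInvariant T Λ) (hK : ∀ j, IsClosed (K j)) : IsClosed (itineraries T Λ K) := by
  refine isOpen_compl_iff.1 (isOpen_iff_eventually.2 fun s hs => ?_)
  simp only [itineraries, mem_compl_iff, mem_ofPred_eq, not_exists, not_and] at hs ⊢
  exact eventually_forall_not_isItinerary hΛ.isCompact hΛ.continuousOn_zpow hK hs

namespace IsSeparatingCover

variable [Nonempty M]

theorem decode_eq (hK : IsSeparatingCover T Λ K) (hx : x ∈ Λ) (hxs : IsItinerary T K x s) :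
    decode T Λ K s = x :=
  hK.subsingleton s (decode_spec ⟨x, hx, hxs⟩) ⟨hx, hxs⟩

theorem decode_shft (hK : IsSeparatingCover T Λ K) (hΛ : IsCompactInvariant T Λ)
    (hs : s ∈ itineraries T Λ K) : decode T Λ K (shft s) = T (decode T Λ K s) :=
  hK.decode_eq (hΛ.mapsTo (decode_spec hs).1) (decode_spec hs).2.apply

theorem decode_image (hK : IsSeparatingCover T Λ K) (hΛ : IsCompactInvariant T Λ) :
    decode T Λ K '' itineraries T Λ K = Λ := by
  refine Subset.antisymm (image_subset_iff.2 fun s hs => (decode_spec hs).1) fun x hx => ?_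
  choose s hs using fun i : ℤ => mem_iUnion.1 (hK.subset_iUnion (hΛ.mapsTo_zpow i hx))
  exact ⟨s, ⟨x, hx, hs⟩, hK.decode_eq hx hs⟩

variable [T2Space M] [TopologicalSpace ι] [DiscreteTopology ι]

theorem continuousOn_decode (hK : IsSeparatingCover T Λ K) (hΛ : IsCompactInvariant T Λ) :
    ContinuousOn (decode T Λ K) (itineraries T Λ K) := by
  intro s hs
  refine tendsto_nhds.2 fun U hU hsU => ?_
  have hfar : ∀ x ∈ Λ \ U, ¬IsItinerary T K x s := fun x hx hxs =>
    hx.2 (hK.decode_eq hx.1 hxs ▸ hsU)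
  have hnear := eventually_forall_not_isItinerary (hΛ.isCompact.diff hU)
    (fun i => (hΛ.continuousOn_zpow i).mono sdiff_subset) hK.isClosed hfar
  filter_upwards [nhdsWithin_le_nhds hnear, self_mem_nhdsWithin] with t ht htS
  by_contra htU
  exact ht _ ⟨(decode_spec htS).1, htU⟩ (decode_spec htS).2

theorem semiconj (hK : IsSeparatingCover T Λ K) (hΛ : IsCompactInvariant T Λ) :
    IsClosed (itineraries T Λ K) ∧ shft '' itineraries T Λ K = itineraries T Λ K ∧
      ContinuousOn (decode T Λ K) (itineraries T Λ K) ∧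
      decode T Λ K '' itineraries T Λ K = Λ ∧
      ∀ s ∈ itineraries T Λ K, decode T Λ K (shft s) = T (decode T Λ K s) :=
  ⟨isClosed_itineraries hΛ hK.isClosed, shft_image_itineraries hΛ, hK.continuousOn_decode hΛ,
    hK.decode_image hΛ, fun _ => hK.decode_shft hΛ⟩

end IsSeparatingCover

section OpenPartition

variable {U : ι → Set M}

theorem mem_of_mem_closure_of_pairwise_disjoint (hU : ∀ j, IsOpen (U j))
    (hdisj : Pairwise (Disjoint on U)) {j : ι} (hcov : x ∈ ⋃ k, U k) (hx : x ∈ closure (U j)) :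
    x ∈ U j := by
  obtain ⟨k, hk⟩ := mem_iUnion.1 hcov
  obtain rfl | hkj := eq_or_ne k j
  · exact hk
  · exact absurd hk (disjoint_left.1 ((hdisj hkj.symm).closure_left (hU k)) hx)

theorem itinerary_decode [Nonempty M] [Nonempty ι] (hΛ : IsCompactInvariant T Λ)
    (hU : ∀ j, IsOpen (U j)) (hdisj : Pairwise (Disjoint on U)) (hcov : Λ ⊆ ⋃ j, U j) :
    LeftInvOn (itinerary T U) (decode T Λ fun j => closure (U j))
      (itineraries T Λ fun j => closure (U j)) := fun s hs => by
  obtain ⟨hΛs, hs⟩ := decode_spec hs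
  exact funext fun i => itinerary_apply_eq hdisj
    (mem_of_mem_closure_of_pairwise_disjoint hU hdisj (hcov (hΛ.mapsTo_zpow i hΛs)) (hs i))

theorem continuousOn_itinerary [Nonempty ι] [TopologicalSpace ι] [DiscreteTopology ι]
    (hΛ : IsCompactInvariant T Λ) (hU : ∀ j, IsOpen (U j)) (hdisj : Pairwise (Disjoint on U))
    (hcov : Λ ⊆ ⋃ j, U j) : ContinuousOn (itinerary T U) Λ := by
  intro x hx
  refine continuousWithinAt_pi.2 fun i => ?_
  have hxi : (T ^ i) x ∈ U (itinerary T U x i) :=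
    Classical.epsilon_spec (p := fun j => (T ^ i) x ∈ U j)
      (mem_iUnion.1 (hcov (hΛ.mapsTo_zpow i hx)))
  rw [ContinuousWithinAt, nhds_discrete, tendsto_pure]
  filter_upwards [hΛ.continuousOn_zpow i x hx ((hU _).mem_nhds hxi)] with y hy
  exact itinerary_apply_eq hdisj hy

end OpenPartition

end Coding

theorem isTotallyDisconnected_of_injOn {α β : Type*} [TopologicalSpace α] [TopologicalSpace β]
    [TotallyDisconnectedSpace β] {f : α → β} {s : Set α} (hf : ContinuousOn f s)
    (hinj : InjOn f s) : IsTotallyDisconnected s := fun _ hts ht _ hx _ hy =>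
  hinj (hts hx) (hts hy) (isTotallyDisconnected_of_totallyDisconnectedSpace _ _ subset_rfl
    (ht.image f (hf.mono hts)) (mem_image_of_mem f hx) (mem_image_of_mem f hy))

section FMS

variable {M : Type} [MetricSpace M] {T : Equiv.Perm M} {Q : Set M}

/-- Closed `δ/2`-balls around a finite net of `Λ`, for an expansivity constant `δ`: two points
with a common itinerary stay `δ`-close along the whole orbit. -/
theorem FMSExpansive.exists_isSeparatingCover (hexp : FMSExpansive T Q)
    (hΛ : IsCompact (trapped T Q)) :
    ∃ (n : ℕ) (K : Fin n → Set M), IsSeparatingCover T (trapped T Q) K := by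
  obtain ⟨δ, hδ, hsep⟩ := hexp
  obtain ⟨c, -, hc, hcov⟩ := finite_cover_balls_of_compact hΛ (half_pos hδ)
  obtain ⟨n, f, rfl⟩ := hc.fin_embedding
  refine ⟨n, fun j => Metric.closedBall (f j) (δ / 2), ⟨fun _ => Metric.isClosed_closedBall,
    fun x hx => ?_, fun s x ⟨hx, hxs⟩ y ⟨hy, hys⟩ => ?_⟩⟩
  · obtain ⟨_, ⟨j, rfl⟩, hj⟩ := mem_iUnion₂.1 (hcov hx)
    exact mem_iUnion.2 ⟨j, Metric.ball_subset_closedBall hj⟩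
  · by_contra hxy
    obtain ⟨i, hi⟩ := hsep x hx y hy hxy
    linarith [dist_triangle_right ((T ^ i) x) ((T ^ i) y) (f (s i)),
      Metric.mem_closedBall.1 (hxs i), Metric.mem_closedBall.1 (hys i)]

/-- Adjoining `∅` to the generator changes nothing but makes the alphabet nonempty. -/
theorem IsGenerator.exists_fin_partition {α : Finset (Set M)} (hgen : IsGenerator T Q α)
    (hdisj : (α : Set (Set M)).Pairwise Disjoint) :
    ∃ (n : ℕ) (U : Fin n → Set M), Nonempty (Fin n) ∧ (∀ j, IsOpen (U j)) ∧
      Pairwise (Disjoint on U) ∧ trapped T Q ⊆ ⋃ j, U j ∧ ∀ j, U j = ∅ ∨ U j ∈ α := by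
  obtain ⟨n, U, hU⟩ := (α.finite_toSet.insert ∅).fin_embedding
  have hUα : ∀ j, U j ∈ insert ∅ (α : Set (Set M)) := fun j => hU ▸ mem_range_self j
  obtain ⟨j₀, -⟩ : ∅ ∈ range U := hU ▸ mem_insert _ _
  refine ⟨n, U, ⟨j₀⟩, fun j => ?_, ?_, fun x hx => ?_, hUα⟩
  · rcases hUα j with h | h
    · exact h ▸ isOpen_empty
    · exact hgen.1 _ h
  · exact (hdisj.insert fun _ _ _ => ⟨disjoint_bot_left, disjoint_bot_right⟩).on_injective
      U.injective hUα
  · obtain ⟨A, hA, hxA⟩ := hgen.2.1 hx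
    obtain ⟨j, rfl⟩ : A ∈ range U := hU ▸ mem_insert_of_mem _ hA
    exact mem_iUnion.2 ⟨j, hxA⟩

theorem IsGenerator.subsingleton_itinerary {ι : Type} {α : Finset (Set M)}
    (hgen : IsGenerator T Q α) {U : ι → Set M} (hUα : ∀ j, U j = ∅ ∨ U j ∈ α) (s : ℤ → ι) :
    {x ∈ trapped T Q | IsItinerary T (fun j => closure (U j)) x s}.Subsingleton := by
  intro x ⟨hx, hxs⟩ y ⟨hy, hys⟩
  have hsα : ∀ i, U (s i) ∈ α := fun i => (hUα (s i)).resolve_left fun h => by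
    simpa [h] using hxs i
  have hmem : ∀ z ∈ trapped T Q, IsItinerary T (fun j => closure (U j)) z s →
      z ∈ Q ∩ ⋂ i : ℤ, ⇑(T ^ i) '' closure (U (s (-i))) := fun z hz hzs =>
    ⟨trapped_subset hz, mem_iInter.2 fun i => Equiv.Perm.mem_zpow_image_iff.2 (hzs (-i))⟩
  exact hgen.2.2 _ (fun i => hsα (-i)) (hmem x hx hxs) (hmem y hy hys)

end FMS

/-- an expansive FMS admits a surjective semi-conjugacy
`Φ : Σ → Λ(T,Q)` from a subshift `Σ` over a finite alphabet; if moreover there is a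
generator of pairwise disjoint sets, `Φ` may be chosen to be a homeomorphism, and
then the trapped set is totally disconnected. -/
theorem stmt_8 {M : Type} [MetricSpace M] (T : Equiv.Perm M) (Q : Set M)
    (h : IsFMS T Q) (hexp : FMSExpansive T Q) :
    (∃ (n : ℕ) (S : Set (ℤ → Fin n)) (Φ : (ℤ → Fin n) → M),
      IsClosed S ∧ shft '' S = S ∧
      ContinuousOn Φ S ∧ Φ '' S = trapped T Q ∧
      ∀ s ∈ S, Φ (shft s) = T (Φ s)) ∧
    ((∃ α : Finset (Set M), IsGenerator T Q α ∧
        (α : Set (Set M)).Pairwise Disjoint) →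
      (∃ (n : ℕ) (S : Set (ℤ → Fin n)) (Φ : (ℤ → Fin n) → M)
          (Ψ : M → (ℤ → Fin n)),
        IsClosed S ∧ shft '' S = S ∧
        ContinuousOn Φ S ∧ Φ '' S = trapped T Q ∧
        (∀ s ∈ S, Φ (shft s) = T (Φ s)) ∧
        Set.InjOn Φ S ∧ ContinuousOn Ψ (trapped T Q) ∧
        (∀ s ∈ S, Ψ (Φ s) = s)) ∧
      IsTotallyDisconnected (trapped T Q)) := by
  obtain ⟨hQ, hT, hT', -, hnonempty, -⟩ := h
  have : Nonempty M := ⟨(hnonempty 0).some⟩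
  have hΛ := isCompactInvariant_trapped hQ hT hT'
  refine ⟨?_, fun ⟨α, hgen, hdisj⟩ => ?_⟩
  · obtain ⟨n, K, hK⟩ := hexp.exists_isSeparatingCover hΛ.isCompact
    exact ⟨n, _, _, hK.semiconj hΛ⟩
  obtain ⟨n, U, _, hUo, hUd, hUc, hUα⟩ := hgen.exists_fin_partition hdisj
  have hK : IsSeparatingCover T (trapped T Q) fun j => closure (U j) :=
    ⟨fun _ => isClosed_closure, hUc.trans (iUnion_mono fun _ => subset_closure),
      hgen.subsingleton_itinerary hUα⟩
  obtain ⟨hS, hshft, hΦ, hΦS, hΦT⟩ := hK.semiconj hΛ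
  have hΨΦ := itinerary_decode hΛ hUo hUd hUc
  have hΨ := continuousOn_itinerary hΛ hUo hUd hUc
  refine ⟨⟨n, _, _, itinerary T U, hS, hshft, hΦ, hΦS, hΦT, hΨΦ.injOn, hΨ, hΨΦ⟩, ?_⟩
  exact isTotallyDisconnected_of_injOn hΨ (hΦS ▸ hΨΦ.rightInvOn_image.injOn)
end

section
/- For every language L ⊆ A*, L(Adh(L)) = C(L), where C(L) = {a ∈ A* : for every N > 0 there exist x, y ∈ A* with |x|, |y| ≥ N and x a y ∈ L} is the center of L. -/
/-- A finite word `a` is a segment of the bi-infinite sequence `s`. -/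
def IsSegment {A : Type} (a : List A) (s : ℤ → A) : Prop :=
  ∃ l : ℤ, ∀ j : Fin a.length, s (l + ((j : ℕ) : ℤ)) = a.get j

/-- The central language of a set of sequences: all segments of its members. -/
def lang {A : Type} (S : Set (ℤ → A)) : Set (List A) :=
  {a | ∃ s ∈ S, IsSegment a s}

/-- The periodization of a nonempty word: `s̄_i = s_{i mod |s|}`. -/
def periodize {A : Type} (a : List A) (ha : a ≠ []) : ℤ → A := fun i =>
  a.get ⟨(i % (a.length : ℤ)).toNat, by
    have h0 : 0 < (a.length : ℤ) := by
      exact_mod_cast List.length_pos_iff.mpr ha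
    have h1 : 0 ≤ i % (a.length : ℤ) := Int.emod_nonneg i (by omega)
    have h2 : i % (a.length : ℤ) < (a.length : ℤ) := Int.emod_lt_of_pos i h0
    omega⟩

/-- The σ-periodic points of `S`: `Per(σ,S)`. -/
def PerSet {A : Type} (S : Set (ℤ → A)) : Set (ℤ → A) :=
  {s ∈ S | ∃ n : ℕ, 0 < n ∧ ∀ i : ℤ, s (i + (n : ℤ)) = s i}

/-- The cyclic language `L_c(S) = ζ⁻¹(Per(σ,S)) ∪ {ε}`. -/
def Lc {A : Type} (S : Set (ℤ → A)) : Set (List A) :=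
  {a | ∃ ha : a ≠ [], periodize a ha ∈ PerSet S} ∪ {[]}

/-- The adherence of a language: sequences all of whose segments occur in words of `L`. -/
def Adh {A : Type} (L : Set (List A)) : Set (ℤ → A) :=
  {s | ∀ a : List A, IsSegment a s → ∃ w ∈ L, a <:+: w}

/-- The center `C(L)`: bi-extensible words of `L`. -/
def Ctr {A : Type} (L : Set (List A)) : Set (List A) :=
  {a | ∀ N : ℕ, 0 < N → ∃ x y : List A,
    N ≤ x.length ∧ N ≤ y.length ∧ x ++ a ++ y ∈ L}

/-- The cyclic center `C_c(L)`: words all of whose repetitions' cyclic permutations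
extend to words of `L` (together with the empty word, by convention). -/
def Cc {A : Type} (L : Set (List A)) : Set (List A) :=
  {a | a = [] ∨ (a ≠ [] ∧ ∀ i : ℕ, 0 < i → ∀ u v : List A,
    u ++ v = List.flatten (List.replicate i a) →
    ∃ x y : List A, x ++ (v ++ u) ++ y ∈ L)}


/-!
A segment `a` of a sequence in `Adh L` is bi-extensible in `L`: the window of the sequence
around `a` with margins `N` is itself a segment, hence an infix of some word of `L`.
Conversely, if `a` is bi-extensible, place the words `x_N a y_N ∈ L` (with `|x_N|, |y_N| > N`)
as sequences with `a` at position `0`. By compactness of `A^ℤ` they have a cluster point `s`;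
every finite window of `s` agrees with the corresponding window of some `x_N a y_N` with `N`
large, so it is an infix of a word of `L`, and `a` sits at position `0` of `s`.
-/

open Filter Topology

variable {A : Type}

def window (s : ℤ → A) (l : ℤ) (n : ℕ) : List A :=
  List.ofFn fun j : Fin n => s (l + j)

@[simp]
lemma length_window (s : ℤ → A) (l : ℤ) (n : ℕ) : (window s l n).length = n :=
  List.length_ofFn

lemma isSegment_iff_exists_window_eq {a : List A} {s : ℤ → A} :
    IsSegment a s ↔ ∃ l, window s l a.length = a := by
  conv_rhs => enter [1, l, 2]; rw [← List.ofFn_get a]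
  simp only [IsSegment, window, List.ofFn_inj, funext_iff]

lemma isSegment_window (s : ℤ → A) (l : ℤ) (n : ℕ) : IsSegment (window s l n) s :=
  isSegment_iff_exists_window_eq.2 ⟨l, by rw [length_window]⟩

lemma window_add (s : ℤ → A) (l : ℤ) (m n : ℕ) :
    window s l (m + n) = window s l m ++ window s (l + m) n := by
  simp only [window, List.ofFn_add, Fin.val_castLE, Fin.val_natAdd, Nat.cast_add, add_assoc]

lemma lang_adh_subset_ctr (L : Set (List A)) : lang (Adh L) ⊆ Ctr L := by
  rintro a ⟨s, hs, ha⟩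
  obtain ⟨l, hl⟩ := isSegment_iff_exists_window_eq.1 ha
  intro N _
  have hsplit : window s (l - N) (N + a.length + N) =
      window s (l - N) N ++ a ++ window s (l + a.length) N := by
    rw [window_add, window_add, sub_add_cancel, hl]
    congr 2
    push_cast
    ring
  obtain ⟨w, hwL, p, q, hpq⟩ := hs _ (isSegment_window s (l - N) (N + a.length + N))
  refine ⟨p ++ window s (l - N) N, window s (l + a.length) N ++ q, by simp, by simp, ?_⟩
  rw [← hpq, hsplit] at hwL
  simpa only [List.append_assoc] using hwL

def placeWord (d : A) (w : List A) (k : ℕ) : ℤ → A :=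
  fun i => w.getD (i + k).toNat d

lemma window_placeWord {d : A} {w : List A} {k : ℕ} {l : ℤ} {n : ℕ} (hl : 0 ≤ l + k)
    (hn : (l + k).toNat + n ≤ w.length) :
    window (placeWord d w k) l n = (w.drop (l + k).toNat).take n := by
  apply List.ext_getElem
  · simp only [length_window, List.length_take, List.length_drop]
    omega
  · intro j hj _
    rw [length_window] at hj
    simp only [window, placeWord, List.getElem_ofFn, List.getElem_take, List.getElem_drop]
    rw [List.getD_eq_getElem _ _ (by omega)]
    congr 1
    omega

lemma window_placeWord_infix (d : A) (w : List A) (k : ℕ) {l : ℤ} {n : ℕ} (hl : 0 ≤ l + k)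
    (hn : l + k + n ≤ w.length) : window (placeWord d w k) l n <:+: w := by
  rw [window_placeWord hl (by omega)]
  exact (List.take_prefix _ _).isInfix.trans (List.drop_suffix _ _).isInfix

lemma window_placeWord_append (d : A) (x a y : List A) :
    window (placeWord d (x ++ a ++ y) x.length) 0 a.length = a := by
  rw [window_placeWord (by simp) (by simp)]
  simp

lemma exists_window_eq_of_mapClusterPt [TopologicalSpace A] [DiscreteTopology A]
    {u : ℕ → ℤ → A} {s : ℤ → A} (hs : MapClusterPt s atTop u) (l : ℤ) (n M : ℕ) :
    ∃ N ≥ M, window (u N) l n = window s l n := by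
  let restrict : (ℤ → A) → Fin n → A := fun t j => t (l + j)
  have hnhds : restrict ⁻¹' {restrict s} ∈ 𝓝 s :=
    (continuous_pi fun _ => continuous_apply _).continuousAt.preimage_mem_nhds
      ((isOpen_discrete _).mem_nhds rfl)
  obtain ⟨N, hN, hu⟩ := frequently_atTop.1 (mapClusterPt_iff_frequently.1 hs _ hnhds) M
  exact ⟨N, hN, congrArg List.ofFn hu⟩

lemma ctr_subset_lang_adh [Finite A] [Nonempty A] [TopologicalSpace A] [DiscreteTopology A]
    (L : Set (List A)) : Ctr L ⊆ lang (Adh L) := by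
  intro a ha
  choose X Y hX hY hXY using fun N : ℕ => ha (N + 1) N.succ_pos
  obtain ⟨d⟩ := ‹Nonempty A›
  let u : ℕ → ℤ → A := fun N => placeWord d (X N ++ a ++ Y N) (X N).length
  obtain ⟨s, hs⟩ := exists_clusterPt_of_compactSpace (map u atTop)
  refine ⟨s, fun b hb => ?_, isSegment_iff_exists_window_eq.2 ⟨0, ?_⟩⟩
  · obtain ⟨l, hl⟩ := isSegment_iff_exists_window_eq.1 hb
    obtain ⟨N, hN, hu⟩ := exists_window_eq_of_mapClusterPt hs l b.length (l.natAbs + b.length)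
    refine ⟨_, hXY N, hl ▸ hu ▸ window_placeWord_infix d _ _ ?_ ?_⟩
    · have := hX N; omega
    · have := hY N; simp only [List.length_append, Nat.cast_add]; omega
  · obtain ⟨N, -, hu⟩ := exists_window_eq_of_mapClusterPt hs 0 a.length 0
    rw [← hu]
    exact window_placeWord_append d _ a _

/-- for every language `L ⊆ A*`, `L(Adh(L)) = C(L)`, the center of `L`. -/
theorem stmt_13 (A : Type) [Fintype A] [Nonempty A] [TopologicalSpace A]
    [DiscreteTopology A] (L : Set (List A)) :
    lang (Adh L) = Ctr L :=
  (lang_adh_subset_ctr L).antisymm (ctr_subset_lang_adh L)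
end

section
/- For every language L ⊆ A*, L_c(Adh(L)) = C_c(L), where C_c(L) = {a ∈ A* : for every i > 0 and every cyclic permutation π(a^i) of the i-fold repetition of a, there exist x, y ∈ A* with x·π(a^i)·y ∈ L} is the cyclic center of L. -/
/-!
The periodization `ā` of a nonempty word `a` is always σ-periodic, so `a ∈ L_c(Adh L)` iff
`ā ∈ Adh L`. The segments of `ā` are exactly the prefixes of cyclic permutations of powers of `a`:
the rotation `v ++ u` of `u ++ v = a ^ i` is the segment of `ā` starting at `|u|`, and a segment
`b` starting at phase `k` is a prefix of `a ^ (|b| + 1)` rotated by `k`. Hence every segment of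
`ā` occurs in a word of `L` iff every cyclic permutation of every power of `a` does.
-/

namespace List

variable {α : Type*}

theorem length_flatten_replicate (a : List α) (i : ℕ) :
    (flatten (replicate i a)).length = i * a.length := by
  simp

theorem length_pos_of_lt_length_flatten_replicate {a : List α} {i j : ℕ}
    (h : j < (flatten (replicate i a)).length) : 0 < a.length := by
  rw [length_flatten_replicate] at h
  exact Nat.pos_of_mul_pos_left (Nat.zero_lt_of_lt h)

theorem getElem_flatten_replicate (a : List α) (i j : ℕ)
    (h : j < (flatten (replicate i a)).length) :
    (flatten (replicate i a))[j] =
      a[j % a.length]'(Nat.mod_lt _ (length_pos_of_lt_length_flatten_replicate h)) := by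
  induction i generalizing j with
  | zero => simp at h
  | succ i ih =>
    simp only [replicate_succ, flatten_cons]
    rcases lt_or_ge j a.length with hj | hj
    · simp only [getElem_append_left hj, Nat.mod_eq_of_lt hj]
    · have h' : j - a.length < (flatten (replicate i a)).length := by
        rw [length_flatten_replicate] at h ⊢
        rw [Nat.succ_mul] at h
        omega
      rw [getElem_append_right hj, ih _ h']
      simp only [Nat.mod_eq_sub_mod hj]

theorem getElem_append_of_append_eq_flatten_replicate {a u v : List α} {i : ℕ}
    (h : u ++ v = flatten (replicate i a)) (j : ℕ) (hj : j < (v ++ u).length) :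
    (v ++ u)[j] = a[(u.length + j) % a.length]'(Nat.mod_lt _ (by
      have : j < (flatten (replicate i a)).length := by
        rw [← h, length_append]; rw [length_append] at hj; omega
      exact length_pos_of_lt_length_flatten_replicate this)) := by
  have hdvd : a.length ∣ (u ++ v).length := by
    rw [h, length_flatten_replicate]; exact Dvd.intro_left i rfl
  simp only [← rotate_append_length_eq u v, getElem_rotate]
  rw [getElem_of_eq h, getElem_flatten_replicate]
  simp only [Nat.mod_mod_of_dvd _ hdvd, Nat.add_comm j]

end List

section Periodize

variable {A : Type} (a : List A) (ha : a ≠ [])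

theorem periodize_eq_of_emod_eq {i i' : ℤ} (h : i % a.length = i' % a.length) :
    periodize a ha i = periodize a ha i' := by
  simp only [periodize, h]

theorem periodize_add_length (i : ℤ) : periodize a ha (i + a.length) = periodize a ha i :=
  periodize_eq_of_emod_eq a ha (Int.add_emod_right i _)

theorem periodize_natCast (m : ℕ) :
    periodize a ha m = a[m % a.length]'(Nat.mod_lt _ (List.length_pos_iff.mpr ha)) := by
  simp only [periodize, List.get_eq_getElem, ← Int.natCast_mod, Int.toNat_natCast]

theorem isSegment_periodize_of_append_eq {u v : List A} {i : ℕ}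
    (h : u ++ v = (List.replicate i a).flatten) : IsSegment (v ++ u) (periodize a ha) :=
  ⟨u.length, fun j => by
    rw [List.get_eq_getElem, List.getElem_append_of_append_eq_flatten_replicate h,
      ← periodize_natCast a ha]
    push_cast
    rfl⟩

theorem exists_append_eq_flatten_replicate_of_isSegment_periodize {b : List A}
    (hb : IsSegment b (periodize a ha)) :
    ∃ u v : List A, u ++ v = (List.replicate (b.length + 1) a).flatten ∧ b <+: v ++ u := by
  obtain ⟨l, hl⟩ := hb
  have hn : 0 < (a.length : ℤ) := by exact_mod_cast List.length_pos_iff.mpr ha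
  -- the rotation point is the phase of the segment's starting position
  set k := (l % a.length).toNat
  have hkl : (k : ℤ) = l % a.length := Int.toNat_of_nonneg (Int.emod_nonneg l hn.ne')
  have hk_lt : k < a.length := by have := Int.emod_lt_of_pos l hn; omega
  set w := (List.replicate (b.length + 1) a).flatten
  have hw_len : w.length = (b.length + 1) * a.length := List.length_flatten_replicate a _
  have hk_le : k + b.length ≤ w.length := by rw [hw_len, Nat.succ_mul]; nlinarith
  have huv : w.take k ++ w.drop k = w := List.take_append_drop k w
  refine ⟨w.take k, w.drop k, huv, List.prefix_iff_eq_take.mpr ?_⟩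
  refine List.ext_getElem (by simp; omega) fun j hj _ => ?_
  rw [List.getElem_take, List.getElem_append_of_append_eq_flatten_replicate huv]
  simp only [List.length_take_of_le (by omega : k ≤ w.length)]
  rw [← periodize_natCast a ha, show b[j] = b.get ⟨j, hj⟩ from rfl, ← hl]
  apply periodize_eq_of_emod_eq
  push_cast
  rw [hkl, Int.emod_add_emod]

end Periodize

theorem periodize_mem_adh_iff {A : Type} {L : Set (List A)} {a : List A} (ha : a ≠ []) :
    periodize a ha ∈ Adh L ↔ ∀ i : ℕ, 0 < i → ∀ u v : List A,
      u ++ v = (List.replicate i a).flatten → ∃ x y : List A, x ++ (v ++ u) ++ y ∈ L := by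
  constructor
  · intro hadh i _ u v huv
    obtain ⟨w, hwL, x, y, rfl⟩ := hadh _ (isSegment_periodize_of_append_eq a ha huv)
    exact ⟨x, y, hwL⟩
  · intro hc b hb
    obtain ⟨u, v, huv, hpre⟩ := exists_append_eq_flatten_replicate_of_isSegment_periodize a ha hb
    obtain ⟨x, y, hxy⟩ := hc _ (Nat.succ_pos _) u v huv
    exact ⟨_, hxy, hpre.isInfix.trans ⟨x, y, rfl⟩⟩

theorem stmt_15_general (A : Type) (L : Set (List A)) :
    Lc (Adh L) = Cc L := by
  ext a
  rcases eq_or_ne a [] with rfl | ha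
  · simp [Lc, Cc]
  have hper : ∃ n : ℕ, 0 < n ∧ ∀ i : ℤ, periodize a ha (i + n) = periodize a ha i :=
    ⟨a.length, List.length_pos_iff.mpr ha, periodize_add_length a ha⟩
  calc a ∈ Lc (Adh L) ↔ periodize a ha ∈ Adh L := by simp [Lc, PerSet, ha, hper]
    _ ↔ a ∈ Cc L := by rw [periodize_mem_adh_iff]; simp [Cc, ha]

/-- for every language `L ⊆ A*`, `L_c(Adh(L)) = C_c(L)`,
the cyclic center of `L`. -/
theorem stmt_15 (A : Type) [Fintype A] [Nonempty A] [TopologicalSpace A]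
    [DiscreteTopology A] (L : Set (List A)) :
    Lc (Adh L) = Cc L :=
  stmt_15_general A L
end
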